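/- Let g be a Lie algebra over a field K of characteristic 0. On the vector space g ⊗ g, the bracket defined by [x⊗y, a⊗b] := [[x,y],a] ⊗ b + a ⊗ [[x,y],b] satisfies the left Leibniz identity, so g ⊗ g becomes a Leibniz algebra. -/

import Mathlib

open TensorProduct

/-!
With `μ : g ⊗ g → g` the bracket map `x ⊗ y ↦ ⁅x, y⁆`, the given bracket is `B u v = ⁅μ u, v⁆`
for the diagonal action of `g` on `g ⊗ g`. Since `μ` is `g`-equivariant, `μ (B u v) = ⁅μ u, μ v⁆`,
and the left Leibniz identity is then the Jacobi identity of the action of `g` on `g ⊗ g`.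
-/

theorem LieModuleHom.lie_apply_lie_eq_sub {R L M : Type*} [CommRing R] [LieRing L]
    [LieAlgebra R L] [AddCommGroup M] [Module R M] [LieRingModule L M]
    (f : M →ₗ⁅R,L⁆ L) (u v w : M) :
    ⁅f ⁅f u, v⁆, w⁆ = ⁅f u, ⁅f v, w⁆⁆ - ⁅f v, ⁅f u, w⁆⁆ := by
  rw [LieModuleHom.map_lie, eq_sub_iff_add_eq, ← leibniz_lie]

theorem apply_apply_eq_lie_toModuleHom {K g : Type*} [CommRing K] [LieRing g] [LieAlgebra K g]
    (B : (g ⊗[K] g) →ₗ[K] (g ⊗[K] g) →ₗ[K] (g ⊗[K] g))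
    (hB : ∀ x y a b : g,
      B (x ⊗ₜ[K] y) (a ⊗ₜ[K] b) = ⁅⁅x, y⁆, a⁆ ⊗ₜ[K] b + a ⊗ₜ[K] ⁅⁅x, y⁆, b⁆)
    (u v : g ⊗[K] g) : B u v = ⁅LieModule.toModuleHom K g g u, v⁆ := by
  let C : (g ⊗[K] g) →ₗ[K] (g ⊗[K] g) →ₗ[K] (g ⊗[K] g) :=
    (LieModule.toEnd K g (g ⊗[K] g) : g →ₗ[K] Module.End K (g ⊗[K] g)) ∘ₗ
      (LieModule.toModuleHom K g g : g ⊗[K] g →ₗ[K] g)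
  have hBC : B = C := by
    refine TensorProduct.ext' fun x y => TensorProduct.ext' fun a b => ?_
    simp only [C, LinearMap.coe_comp, Function.comp_apply, LieModuleHom.coe_toLinearMap,
      LieModule.toModuleHom_apply, LieHom.coe_toLinearMap, LieModule.toEnd_apply_apply, hB,
      TensorProduct.LieModule.lie_tmul_right]
  rw [hBC]
  rfl

theorem stmt6_general {K : Type*} [Field K]
    {g : Type*} [LieRing g] [LieAlgebra K g]
    (B : (g ⊗[K] g) →ₗ[K] (g ⊗[K] g) →ₗ[K] (g ⊗[K] g))
    (hB : ∀ x y a b : g,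
      B (x ⊗ₜ[K] y) (a ⊗ₜ[K] b) = ⁅⁅x, y⁆, a⁆ ⊗ₜ[K] b + a ⊗ₜ[K] ⁅⁅x, y⁆, b⁆) :
    ∀ u v w : g ⊗[K] g, B (B u v) w = B u (B v w) - B v (B u w) := by
  intro u v w
  simp only [apply_apply_eq_lie_toModuleHom B hB]
  exact (LieModule.toModuleHom K g g).lie_apply_lie_eq_sub u v w

/-- For a Lie algebra `g` over a field of characteristic 0, the
bracket `[x⊗y, a⊗b] = ⁅⁅x,y⁆,a⁆ ⊗ b + a ⊗ ⁅⁅x,y⁆,b⁆` makes `g ⊗ g` a Leibniz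
algebra. -/
theorem stmt6 {K : Type*} [Field K] [CharZero K]
    {g : Type*} [LieRing g] [LieAlgebra K g]
    (B : (g ⊗[K] g) →ₗ[K] (g ⊗[K] g) →ₗ[K] (g ⊗[K] g))
    (hB : ∀ x y a b : g,
      B (x ⊗ₜ[K] y) (a ⊗ₜ[K] b) = ⁅⁅x, y⁆, a⁆ ⊗ₜ[K] b + a ⊗ₜ[K] ⁅⁅x, y⁆, b⁆) :
    ∀ u v w : g ⊗[K] g, B (B u v) w = B u (B v w) - B v (B u w) :=
  stmt6_general B hB
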